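/- arXiv:2506.03341 — 2 statements merged into one kernel-verified Lean document; each statement's English description precedes it below -/
import Mathlib

section
/- For every x in X and every r with 0 < r ≤ 1, the open ball B_{δ_D}(x,r) = {y : δ_D(x,y) < r} equals the largest dyadic cube containing x with measure strictly less than r. Consequently D coincides with the collection of all δ_D-balls. -/
open MeasureTheory Set

/-- A dyadic family with inheritance coefficient `B` on a probability space `(X, μ)`:
nested finite partitions `cubes j` of `X` into measurable sets of positive measure,
`cubes 0 = {univ}`, each cube at level `j+1` strictly contained in a unique cube
(its first ancestor) at level `j`, and `μ(ancestor) ≤ B · μ(child)`. -/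
structure DyadicFamily {X : Type*} [MeasurableSpace X] (μ : MeasureTheory.Measure X)
    (B : ℝ) where
  cubes : ℕ → Set (Set X)
  finiteLevel : ∀ j, (cubes j).Finite
  meas : ∀ j, ∀ Q ∈ cubes j, MeasurableSet Q
  zeroth : cubes 0 = {Set.univ}
  cover : ∀ j, ⋃₀ cubes j = Set.univ
  pdisjoint : ∀ j, (cubes j).PairwiseDisjoint id
  posMeasure : ∀ j, ∀ Q ∈ cubes j, 0 < μ Q
  ancestor : ∀ j, ∀ Q ∈ cubes (j + 1), ∃! P, P ∈ cubes j ∧ Q ⊂ P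
  inherit : ∀ j, ∀ Q ∈ cubes (j + 1), ∀ P ∈ cubes j, Q ⊂ P →
    (μ P).toReal ≤ B * (μ Q).toReal
  prob : μ Set.univ = 1

namespace DyadicFamily

variable {X : Type*} [MeasurableSpace X] {μ : MeasureTheory.Measure X} {B : ℝ}

/-- Membership in the dyadic family: `Q` is a cube of some level. -/
def Mem (D : DyadicFamily μ B) (Q : Set X) : Prop := ∃ j, Q ∈ D.cubes j

/-- The offspring of a cube `Q` of level `j`: the cubes of level `j+1`
strictly contained in `Q` (equivalently, whose first ancestor is `Q`). -/
def offspring (D : DyadicFamily μ B) (j : ℕ) (Q : Set X) : Set (Set X) :=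
  {Q' ∈ D.cubes (j + 1) | Q' ⊂ Q}

/-- The pseudo-ultrametric `δ_D(x,y) = inf {μ(Q) : x, y ∈ Q ∈ D}`. -/
noncomputable def delta (D : DyadicFamily μ B) (x y : X) : ℝ :=
  sInf {r : ℝ | ∃ Q, D.Mem Q ∧ x ∈ Q ∧ y ∈ Q ∧ r = (μ Q).toReal}

/-- The distance between two dyadic cubes via the smallest common dyadic ancestor. -/
noncomputable def cubeDist (D : DyadicFamily μ B) (Q₁ Q₂ : Set X) : ℝ :=
  sInf {r : ℝ | ∃ P, D.Mem P ∧ Q₁ ∪ Q₂ ⊆ P ∧ r = (μ P).toReal}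

/-- Mean value of `f` over `Q`. -/
noncomputable def avg (μ : MeasureTheory.Measure X) (f : X → ℝ) (Q : Set X) : ℝ :=
  ((μ Q).toReal)⁻¹ * ∫ x in Q, f x ∂μ

/-- `f` belongs to `V_{j,Q}`: it vanishes outside `Q` and is constant on each
offspring cube of `Q`. -/
def MemV (D : DyadicFamily μ B) (j : ℕ) (Q : Set X) (f : X → ℝ) : Prop :=
  (∀ Q' ∈ D.offspring j Q, ∃ c : ℝ, ∀ x ∈ Q', f x = c) ∧ ∀ x ∉ Q, f x = 0

lemma measure_ne_top' (D : DyadicFamily μ B) {j : ℕ} {Q : Set X} (hQ : Q ∈ D.cubes j) :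
    μ Q ≠ ⊤ := by
  have h : μ Q ≤ 1 := D.prob ▸ measure_mono (subset_univ Q)
  exact (lt_of_le_of_lt h ENNReal.one_lt_top).ne

lemma toReal_pos' (D : DyadicFamily μ B) {j : ℕ} {Q : Set X} (hQ : Q ∈ D.cubes j) :
    0 < (μ Q).toReal :=
  ENNReal.toReal_pos (D.posMeasure j Q hQ).ne' (D.measure_ne_top' hQ)

lemma exists_unique_cube (D : DyadicFamily μ B) (j : ℕ) (x : X) :
    ∃! Q, Q ∈ D.cubes j ∧ x ∈ Q := by
  have hx : x ∈ ⋃₀ D.cubes j := (D.cover j).symm ▸ mem_univ x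
  obtain ⟨Q, hQ, hxQ⟩ := hx
  refine ⟨Q, ⟨hQ, hxQ⟩, ?_⟩
  rintro Q' ⟨hQ', hxQ'⟩
  by_contra hne
  exact Set.disjoint_left.mp (D.pdisjoint j hQ' hQ hne) hxQ' hxQ

/-- The unique cube of level `j` containing `x`. -/
noncomputable def cubeAt (D : DyadicFamily μ B) (j : ℕ) (x : X) : Set X :=
  (D.exists_unique_cube j x).exists.choose

lemma cubeAt_mem (D : DyadicFamily μ B) (j : ℕ) (x : X) : D.cubeAt j x ∈ D.cubes j :=
  (D.exists_unique_cube j x).exists.choose_spec.1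

lemma mem_cubeAt (D : DyadicFamily μ B) (j : ℕ) (x : X) : x ∈ D.cubeAt j x :=
  (D.exists_unique_cube j x).exists.choose_spec.2

lemma cubeAt_eq (D : DyadicFamily μ B) {j : ℕ} {Q : Set X} {x : X}
    (hQ : Q ∈ D.cubes j) (hx : x ∈ Q) : Q = D.cubeAt j x :=
  (D.exists_unique_cube j x).unique ⟨hQ, hx⟩ ⟨D.cubeAt_mem j x, D.mem_cubeAt j x⟩

lemma cubeAt_zero (D : DyadicFamily μ B) (x : X) : D.cubeAt 0 x = univ := by
  have h := D.cubeAt_mem 0 x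
  rw [D.zeroth] at h
  exact h

lemma ssubset_of_mem_succ (D : DyadicFamily μ B) {j : ℕ} {Q P : Set X} {x : X}
    (hQ : Q ∈ D.cubes (j + 1)) (hP : P ∈ D.cubes j) (hxQ : x ∈ Q) (hxP : x ∈ P) :
    Q ⊂ P := by
  obtain ⟨P', ⟨hP', hQP'⟩, -⟩ := D.ancestor j Q hQ
  have hx' : x ∈ P' := hQP'.subset hxQ
  have : P = P' := by rw [D.cubeAt_eq hP hxP, D.cubeAt_eq hP' hx']
  exact this ▸ hQP'

lemma subset_of_le (D : DyadicFamily μ B) {j k : ℕ} {Q P : Set X} {x : X}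
    (hjk : j ≤ k) (hQ : Q ∈ D.cubes k) (hP : P ∈ D.cubes j)
    (hxQ : x ∈ Q) (hxP : x ∈ P) : Q ⊆ P := by
  induction k generalizing Q with
  | zero =>
    obtain rfl : j = 0 := Nat.le_zero.mp hjk
    rw [D.cubeAt_eq hQ hxQ, ← D.cubeAt_eq hP hxP]
  | succ k ih =>
    rcases Nat.eq_or_lt_of_le hjk with h | h
    · subst h
      rw [D.cubeAt_eq hQ hxQ, ← D.cubeAt_eq hP hxP]
    · have hk : j ≤ k := Nat.lt_succ_iff.mp h
      have h1 : Q ⊂ D.cubeAt k x :=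
        D.ssubset_of_mem_succ hQ (D.cubeAt_mem k x) hxQ (D.mem_cubeAt k x)
      exact h1.subset.trans (ih hk (D.cubeAt_mem k x) (D.mem_cubeAt k x))

lemma child_decay (D : DyadicFamily μ B) (hB : 2 ≤ B) {j : ℕ} {Q P : Set X}
    (hQ : Q ∈ D.cubes (j + 1)) (hP : P ∈ D.cubes j) (hQP : Q ⊂ P) :
    (μ Q).toReal ≤ (1 - 1 / B) * (μ P).toReal := by
  obtain ⟨z, hzP, hzQ⟩ := exists_of_ssubset hQP
  obtain ⟨Q'', ⟨hQ'', hzQ''⟩, -⟩ := D.exists_unique_cube (j + 1) z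
  have hQ''P : Q'' ⊂ P := D.ssubset_of_mem_succ hQ'' hP hzQ'' hzP
  have hne : Q ≠ Q'' := fun h => hzQ (h ▸ hzQ'')
  have hdisj : Disjoint Q Q'' := D.pdisjoint (j + 1) hQ hQ'' hne
  have hsum : μ Q + μ Q'' ≤ μ P := by
    rw [← measure_union hdisj (D.meas _ _ hQ'')]
    exact measure_mono (union_subset hQP.subset hQ''P.subset)
  have hBpos : (0 : ℝ) < B := lt_of_lt_of_le two_pos hB
  have h1 : (μ P).toReal ≤ B * (μ Q'').toReal := D.inherit j Q'' hQ'' P hP hQ''P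
  have h2 : (μ Q).toReal + (μ Q'').toReal ≤ (μ P).toReal := by
    rw [← ENNReal.toReal_add (D.measure_ne_top' hQ) (D.measure_ne_top' hQ'')]
    exact ENNReal.toReal_mono (D.measure_ne_top' hP) hsum
  have hub : (μ P).toReal / B ≤ (μ Q'').toReal := by
    rw [div_le_iff₀ hBpos]
    linarith [h1]
  have hring : (1 - 1 / B) * (μ P).toReal = (μ P).toReal - (μ P).toReal / B := by
    field_simp
  linarith

lemma cubeAt_succ_ssubset (D : DyadicFamily μ B) (j : ℕ) (x : X) :
    D.cubeAt (j + 1) x ⊂ D.cubeAt j x :=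
  D.ssubset_of_mem_succ (D.cubeAt_mem (j + 1) x) (D.cubeAt_mem j x)
    (D.mem_cubeAt (j + 1) x) (D.mem_cubeAt j x)

lemma cubeAt_succ_lt (D : DyadicFamily μ B) (hB : 2 ≤ B) (j : ℕ) (x : X) :
    (μ (D.cubeAt (j + 1) x)).toReal < (μ (D.cubeAt j x)).toReal := by
  have h := D.child_decay hB (D.cubeAt_mem (j + 1) x) (D.cubeAt_mem j x)
    (D.cubeAt_succ_ssubset j x)
  have hBpos : (0 : ℝ) < B := lt_of_lt_of_le two_pos hB
  have h1 : 0 < 1 / B := by positivity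
  have h2 : 0 < (μ (D.cubeAt j x)).toReal := D.toReal_pos' (D.cubeAt_mem j x)
  nlinarith

lemma cubeAt_toReal_le (D : DyadicFamily μ B) (hB : 2 ≤ B) (j : ℕ) (x : X) :
    (μ (D.cubeAt j x)).toReal ≤ (1 - 1 / B) ^ j := by
  have hBpos : (0 : ℝ) < B := lt_of_lt_of_le two_pos hB
  have h0 : 0 ≤ 1 - 1 / B := by
    have : 1 / B ≤ 1 / 2 := by
      apply one_div_le_one_div_of_le <;> linarith
    linarith
  induction j with
  | zero => simp [D.cubeAt_zero, D.prob]
  | succ j ih =>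
    have h := D.child_decay hB (D.cubeAt_mem (j + 1) x) (D.cubeAt_mem j x)
      (D.cubeAt_succ_ssubset j x)
    calc (μ (D.cubeAt (j + 1) x)).toReal ≤ (1 - 1 / B) * (μ (D.cubeAt j x)).toReal := h
      _ ≤ (1 - 1 / B) * (1 - 1 / B) ^ j := by nlinarith
      _ = (1 - 1 / B) ^ (j + 1) := by ring

lemma cubeAt_antitone (D : DyadicFamily μ B) {k j : ℕ} (x : X) (h : k ≤ j) :
    (μ (D.cubeAt j x)).toReal ≤ (μ (D.cubeAt k x)).toReal := by
  have hsub : D.cubeAt j x ⊆ D.cubeAt k x :=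
    D.subset_of_le h (D.cubeAt_mem j x) (D.cubeAt_mem k x)
      (D.mem_cubeAt j x) (D.mem_cubeAt k x)
  exact ENNReal.toReal_mono (D.measure_ne_top' (D.cubeAt_mem k x)) (measure_mono hsub)

lemma delta_set_nonempty (D : DyadicFamily μ B) (x y : X) :
    {r : ℝ | ∃ Q, D.Mem Q ∧ x ∈ Q ∧ y ∈ Q ∧ r = (μ Q).toReal}.Nonempty :=
  ⟨(μ univ).toReal, univ, ⟨0, by rw [D.zeroth]; exact mem_singleton _⟩,
    mem_univ x, mem_univ y, rfl⟩

lemma delta_bddBelow (D : DyadicFamily μ B) (x y : X) :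
    BddBelow {r : ℝ | ∃ Q, D.Mem Q ∧ x ∈ Q ∧ y ∈ Q ∧ r = (μ Q).toReal} :=
  ⟨0, by rintro r ⟨Q, -, -, -, rfl⟩; exact ENNReal.toReal_nonneg⟩

lemma delta_le (D : DyadicFamily μ B) {x y : X} {Q : Set X}
    (hQ : D.Mem Q) (hx : x ∈ Q) (hy : y ∈ Q) : D.delta x y ≤ (μ Q).toReal :=
  csInf_le (D.delta_bddBelow x y) ⟨Q, hQ, hx, hy, rfl⟩

lemma exists_of_delta_lt (D : DyadicFamily μ B) {x y : X} {r : ℝ}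
    (h : D.delta x y < r) : ∃ Q, D.Mem Q ∧ x ∈ Q ∧ y ∈ Q ∧ (μ Q).toReal < r := by
  obtain ⟨s, hs, hsr⟩ := exists_lt_of_csInf_lt (D.delta_set_nonempty x y) h
  obtain ⟨Q, hQ, hx, hy, rfl⟩ := hs
  exact ⟨Q, hQ, hx, hy, hsr⟩

lemma ball_eq (D : DyadicFamily μ B) {x : X} {r : ℝ} {Q : Set X}
    (hmem : D.Mem Q) (hx : x ∈ Q) (hlt : (μ Q).toReal < r)
    (hmax : ∀ Q', D.Mem Q' → x ∈ Q' → (μ Q').toReal < r → Q' ⊆ Q) :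
    {y | D.delta x y < r} = Q := by
  ext y
  constructor
  · intro hy
    obtain ⟨P, hP, hxP, hyP, hPr⟩ := D.exists_of_delta_lt hy
    exact hmax P hP hxP hPr hyP
  · intro hy
    exact lt_of_le_of_lt (D.delta_le hmem hx hy) hlt

lemma maximal_cubeAt (D : DyadicFamily μ B) {x : X} {r : ℝ} {j : ℕ}
    (hj : ∀ k, (μ (D.cubeAt k x)).toReal < r → j ≤ k) :
    ∀ Q', D.Mem Q' → x ∈ Q' → (μ Q').toReal < r → Q' ⊆ D.cubeAt j x := by
  rintro Q' ⟨k, hk⟩ hxQ' hlt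
  have hQ' : Q' = D.cubeAt k x := D.cubeAt_eq hk hxQ'
  have hle : j ≤ k := hj k (hQ' ▸ hlt)
  rw [hQ']
  exact D.subset_of_le hle (D.cubeAt_mem k x) (D.cubeAt_mem j x)
    (D.mem_cubeAt k x) (D.mem_cubeAt j x)

lemma part1 (hB : 2 ≤ B) (D : DyadicFamily μ B) (x : X) (r : ℝ) (hr : 0 < r) :
    ∃ Q : Set X, D.Mem Q ∧ x ∈ Q ∧ (μ Q).toReal < r ∧
      (∀ Q' : Set X, D.Mem Q' → x ∈ Q' → (μ Q').toReal < r → Q' ⊆ Q) ∧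
      {y : X | D.delta x y < r} = Q := by
  have hBpos : (0 : ℝ) < B := lt_of_lt_of_le two_pos hB
  have h1B : 1 - 1 / B < 1 := by
    have : 0 < 1 / B := by positivity
    linarith
  have h0B : 0 ≤ 1 - 1 / B := by
    have : 1 / B ≤ 1 / 2 := by
      apply one_div_le_one_div_of_le <;> linarith
    linarith
  have hex : ∃ j, (μ (D.cubeAt j x)).toReal < r := by
    obtain ⟨n, hn⟩ := exists_pow_lt_of_lt_one hr h1B
    exact ⟨n, lt_of_le_of_lt (D.cubeAt_toReal_le hB n x) hn⟩
  classical
  set j := Nat.find hex with hjdef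
  have hspec : (μ (D.cubeAt j x)).toReal < r := Nat.find_spec hex
  have hmin : ∀ k, (μ (D.cubeAt k x)).toReal < r → j ≤ k := fun k hk =>
    Nat.find_min' hex hk
  refine ⟨D.cubeAt j x, ⟨j, D.cubeAt_mem j x⟩, D.mem_cubeAt j x, hspec,
    D.maximal_cubeAt hmin, D.ball_eq ⟨j, D.cubeAt_mem j x⟩ (D.mem_cubeAt j x) hspec
      (D.maximal_cubeAt hmin)⟩

end DyadicFamily

/-- For `0 < r ≤ 1` the `δ_D`-ball of radius `r` centered at `x`
equals the largest dyadic cube containing `x` of measure strictly less than `r`;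
consequently `D` coincides with the collection of all `δ_D`-balls. -/
theorem ball_eq_largest_cube {X : Type*} [MeasurableSpace X]
    {μ : MeasureTheory.Measure X} {B : ℝ} (hB : 2 ≤ B) (D : DyadicFamily μ B) :
    (∀ (x : X) (r : ℝ), 0 < r → r ≤ 1 →
      ∃ Q : Set X, D.Mem Q ∧ x ∈ Q ∧ (μ Q).toReal < r ∧
        (∀ Q' : Set X, D.Mem Q' → x ∈ Q' → (μ Q').toReal < r → Q' ⊆ Q) ∧
        {y : X | D.delta x y < r} = Q) ∧
    {Q : Set X | D.Mem Q} =
      {S : Set X | ∃ (x : X) (r : ℝ), 0 < r ∧ S = {y : X | D.delta x y < r}} := by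
  have hunivmem : D.Mem Set.univ := ⟨0, by rw [D.zeroth]; exact Set.mem_singleton _⟩
  have huniv1 : (μ (Set.univ : Set X)).toReal = 1 := by simp [D.prob]
  constructor
  · intro x r hr _
    exact D.part1 hB x r hr
  · ext S
    simp only [Set.mem_setOf_eq]
    constructor
    · rintro ⟨j, hS⟩
      have hne : S.Nonempty :=
        MeasureTheory.nonempty_of_measure_ne_zero (D.posMeasure j S hS).ne'
      obtain ⟨x, hx⟩ := hne
      have hSx : S = D.cubeAt j x := D.cubeAt_eq hS hx
      match j with
      | 0 =>
        refine ⟨x, 2, two_pos, ?_⟩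
        rw [hSx, D.cubeAt_zero]
        ext y
        simp only [Set.mem_univ, Set.mem_setOf_eq, true_iff]
        calc D.delta x y ≤ (μ (Set.univ : Set X)).toReal :=
              D.delta_le hunivmem (Set.mem_univ x) (Set.mem_univ y)
          _ = 1 := huniv1
          _ < 2 := one_lt_two
      | j + 1 =>
        refine ⟨x, (μ (D.cubeAt j x)).toReal, D.toReal_pos' (D.cubeAt_mem j x), ?_⟩
        rw [hSx]
        have hlt : (μ (D.cubeAt (j + 1) x)).toReal < (μ (D.cubeAt j x)).toReal :=
          D.cubeAt_succ_lt hB j x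
        have hmin : ∀ k, (μ (D.cubeAt k x)).toReal < (μ (D.cubeAt j x)).toReal →
            j + 1 ≤ k := by
          intro k hk
          by_contra h
          push_neg at h
          exact absurd (D.cubeAt_antitone x (Nat.lt_succ_iff.mp h)) (not_le.mpr hk)
        exact (D.ball_eq ⟨j + 1, D.cubeAt_mem (j + 1) x⟩ (D.mem_cubeAt (j + 1) x)
          hlt (D.maximal_cubeAt hmin)).symm
    · rintro ⟨x, r, hr, rfl⟩
      rcases le_or_gt r 1 with hr1 | hr1
      · obtain ⟨Q, hQmem, -, -, -, hball⟩ := D.part1 hB x r hr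
        rw [hball]
        exact hQmem
      · have : {y : X | D.delta x y < r} = Set.univ := by
          ext y
          simp only [Set.mem_setOf_eq, Set.mem_univ, iff_true]
          calc D.delta x y ≤ (μ (Set.univ : Set X)).toReal :=
                D.delta_le hunivmem (Set.mem_univ x) (Set.mem_univ y)
            _ = 1 := huniv1
            _ < r := hr1
        rw [this]
        exact hunivmem
end

section
/- Suppose f ∈ L¹(X,μ) and there is C > 0 with |⟨f, ψ^λ_{j,k}⟩| ≤ C·μ(Q_{j,k})^{α+1/2} for all j,k,λ. Then for every Q ∈ D and every Q̃ in the offspring of Q, |f_{Q̃} − f_Q| ≤ C·√((μ(Q)−μ(Q̃))/(μ(Q)μ(Q̃)))·√(dim V_Q − 1)·μ(Q)^{α+1/2}. -/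
open MeasureTheory Set

/-! The function `g = χ_{Q̃}/μ(Q̃) − χ_Q/μ(Q)` lies in `V_Q`, has mean zero, and satisfies
`⟨f, g⟩ = f_{Q̃} − f_Q` and `‖g‖₂² = 1/μ(Q̃) − 1/μ(Q) = (μ(Q) − μ(Q̃))/(μ(Q)μ(Q̃))`.
Expanding `g = ∑ cᵢ ψᵢ` in the orthonormal basis of the mean-zero part of `V_Q` gives
`f_{Q̃} − f_Q = ∑ cᵢ ⟨f, ψᵢ⟩` with `∑ cᵢ² = ‖g‖₂²`, and Cauchy–Schwarz over the `n` coefficients,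
each `⟨f, ψᵢ⟩` bounded by `C μ(Q)^{α+1/2}`, gives the estimate. -/

lemma Real.abs_sum_mul_le_sqrt_sum_sq_mul_sqrt_card {ι : Type*} (s : Finset ι) (c a : ι → ℝ)
    {K : ℝ} (ha : ∀ i ∈ s, |a i| ≤ K) :
    |∑ i ∈ s, c i * a i| ≤ √(∑ i ∈ s, c i ^ 2) * √s.card * K := by
  rcases s.eq_empty_or_nonempty with rfl | ⟨i₀, hi₀⟩
  · simp
  have hK : 0 ≤ K := (abs_nonneg _).trans (ha i₀ hi₀)
  have hsq : √(∑ i ∈ s, a i ^ 2) ≤ √s.card * K := by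
    rw [← Real.sqrt_sq hK, ← Real.sqrt_mul (Nat.cast_nonneg _)]
    refine Real.sqrt_le_sqrt ((Finset.sum_le_card_nsmul _ _ _ fun i hi => ?_).trans_eq
      (nsmul_eq_mul _ _))
    simpa using pow_le_pow_left₀ (abs_nonneg (a i)) (ha i hi) 2
  have hcs := Real.sum_mul_le_sqrt_mul_sqrt s c a
  have hcs' := Real.sum_mul_le_sqrt_mul_sqrt s c (-a)
  simp only [Pi.neg_apply, mul_neg, Finset.sum_neg_distrib, neg_sq] at hcs'
  rw [mul_assoc]
  exact abs_le'.mpr ⟨hcs.trans (by gcongr), hcs'.trans (by gcongr)⟩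

section Orthonormal

variable {X ι : Type*} [MeasurableSpace X] {μ : Measure X}

lemma integral_mul_sum_eq_sum_mul_integral (s : Finset ι) (f : X → ℝ) (ψ : ι → X → ℝ)
    (c : ι → ℝ) (hint : ∀ i ∈ s, Integrable (fun x => f x * ψ i x) μ) :
    ∫ x, f x * ∑ i ∈ s, c i * ψ i x ∂μ = ∑ i ∈ s, c i * ∫ x, f x * ψ i x ∂μ := by
  simp_rw [Finset.mul_sum, mul_left_comm (f _)]
  rw [integral_finsetSum _ fun i hi => (hint i hi).const_mul (c i)]
  simp_rw [integral_const_mul]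

lemma integral_sum_mul_sum_of_orthonormal [Fintype ι] [DecidableEq ι] (ψ : ι → X → ℝ)
    (c : ι → ℝ) (hint : ∀ i i', Integrable (fun x => ψ i x * ψ i' x) μ)
    (hortho : ∀ i i', ∫ x, ψ i x * ψ i' x ∂μ = if i = i' then 1 else 0) :
    ∫ x, (∑ i, c i * ψ i x) * ∑ i, c i * ψ i x ∂μ = ∑ i, c i ^ 2 := by
  have hpair : ∀ i, ∫ x, ψ i x * ∑ i', c i' * ψ i' x ∂μ = c i := fun i => by
    rw [integral_mul_sum_eq_sum_mul_integral _ _ _ _ fun i' _ => hint i i']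
    simp [hortho]
  rw [integral_mul_sum_eq_sum_mul_integral]
  · simp_rw [mul_comm (∑ i, c i * ψ i _), hpair, sq]
  · intro i _
    simp_rw [Finset.sum_mul, mul_assoc]
    exact integrable_finsetSum _ fun i' _ => (hint i' i).const_mul (c i')

end Orthonormal

namespace DyadicFamily

variable {X : Type*} [MeasurableSpace X] {μ : Measure X}

lemma avg_eq_of_forall_eq [IsFiniteMeasure μ] {s : Set X} (hs : MeasurableSet s) {f : X → ℝ}
    {c : ℝ} (hμs : μ s ≠ 0) (h : ∀ x ∈ s, f x = c) : avg μ f s = c := by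
  rw [avg, setIntegral_congr_fun hs h, setIntegral_const, smul_eq_mul, ← mul_assoc,
    measureReal_def, inv_mul_cancel₀ (ENNReal.toReal_ne_zero.mpr ⟨hμs, measure_ne_top μ s⟩),
    one_mul]

end DyadicFamily

section avgDiffRepr

open DyadicFamily

variable {X : Type*} [MeasurableSpace X] {μ : Measure X}

/-- For an offspring cube `s` of `t`, this is the function `g` of the paper. -/
noncomputable def avgDiffRepr (μ : Measure X) (s t : Set X) : X → ℝ :=
  fun x => s.indicator (fun _ => (μ s).toReal⁻¹) x - t.indicator (fun _ => (μ t).toReal⁻¹) x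

variable {s t : Set X}

lemma integral_mul_avgDiffRepr (hs : MeasurableSet s) (ht : MeasurableSet t) {f : X → ℝ}
    (hf : Integrable f μ) :
    ∫ x, f x * avgDiffRepr μ s t x ∂μ = avg μ f s - avg μ f t := by
  simp_rw [avgDiffRepr, mul_sub, ← Set.indicator_mul_right]
  rw [integral_sub ((hf.mul_const _).indicator hs) ((hf.mul_const _).indicator ht),
    integral_indicator hs, integral_indicator ht, integral_mul_const, integral_mul_const,
    avg, avg, mul_comm, mul_comm (∫ x in t, f x ∂μ)]

variable [IsFiniteMeasure μ]

lemma integrable_avgDiffRepr (hs : MeasurableSet s) (ht : MeasurableSet t) :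
    Integrable (avgDiffRepr μ s t) μ :=
  ((integrable_const _).indicator hs).sub ((integrable_const _).indicator ht)

lemma integral_avgDiffRepr (hs : MeasurableSet s) (ht : MeasurableSet t) (hμs : μ s ≠ 0)
    (hμt : μ t ≠ 0) : ∫ x, avgDiffRepr μ s t x ∂μ = 0 := by
  simpa [avg_eq_of_forall_eq hs hμs (f := fun _ => (1 : ℝ)) fun _ _ => rfl,
    avg_eq_of_forall_eq ht hμt (f := fun _ => (1 : ℝ)) fun _ _ => rfl]
    using integral_mul_avgDiffRepr hs ht (integrable_const (μ := μ) (1 : ℝ))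

lemma integral_avgDiffRepr_mul_self (hs : MeasurableSet s) (ht : MeasurableSet t) (hst : s ⊆ t)
    (hμs : μ s ≠ 0) (hμt : μ t ≠ 0) :
    ∫ x, avgDiffRepr μ s t x * avgDiffRepr μ s t x ∂μ = (μ s).toReal⁻¹ - (μ t).toReal⁻¹ := by
  have hvanish : ∀ x ∉ t, avgDiffRepr μ s t x = 0 := fun x hx => by
    simp [avgDiffRepr, hx, Set.notMem_subset hst hx]
  have havg_t : avg μ (avgDiffRepr μ s t) t = 0 := by
    rw [avg, setIntegral_eq_integral_of_forall_compl_eq_zero hvanish,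
      integral_avgDiffRepr hs ht hμs hμt, mul_zero]
  rw [integral_mul_avgDiffRepr hs ht (integrable_avgDiffRepr hs ht), havg_t, sub_zero]
  exact avg_eq_of_forall_eq hs hμs fun x hx => by simp [avgDiffRepr, hx, hst hx]

end avgDiffRepr

namespace DyadicFamily

variable {X : Type*} [MeasurableSpace X] {μ : Measure X} {B : ℝ}

lemma isProbabilityMeasure (D : DyadicFamily μ B) : IsProbabilityMeasure μ := ⟨D.prob⟩

lemma offspring_finite (D : DyadicFamily μ B) (j : ℕ) (Q : Set X) :
    (D.offspring j Q).Finite :=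
  (D.finiteLevel (j + 1)).subset fun _ h => h.1

lemma subset_biUnion_offspring (D : DyadicFamily μ B) {j : ℕ} {Q : Set X}
    (hQ : Q ∈ D.cubes j) : Q ⊆ ⋃ Q' ∈ D.offspring j Q, Q' := by
  intro x hx
  obtain ⟨Q', hQ'c, hxQ'⟩ : x ∈ ⋃₀ D.cubes (j + 1) := by rw [D.cover]; trivial
  obtain ⟨P, ⟨hPc, hQ'P⟩, -⟩ := D.ancestor j Q' hQ'c
  obtain rfl : P = Q := D.pdisjoint j |>.elim hPc hQ
    (Set.not_disjoint_iff.mpr ⟨x, hQ'P.subset hxQ', hx⟩)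
  exact Set.mem_biUnion ⟨hQ'c, hQ'P⟩ hxQ'

lemma MemV.integrable_mul {D : DyadicFamily μ B} {j : ℕ} {Q : Set X} {φ f : X → ℝ}
    (hQ : Q ∈ D.cubes j) (hφ : D.MemV j Q φ) (hf : Integrable f μ) :
    Integrable (fun x => f x * φ x) μ := by
  have hsupp : Function.support (fun x => f x * φ x) ⊆ Q :=
    Function.support_subset_iff'.mpr fun x hx => by simp [hφ.2 x hx]
  rw [← integrableOn_iff_integrable_of_support_subset hsupp]
  refine IntegrableOn.mono_set ?_ (D.subset_biUnion_offspring hQ)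
  rw [integrableOn_finite_biUnion (D.offspring_finite j Q)]
  intro Q' hQ'
  obtain ⟨c, hc⟩ := hφ.1 Q' hQ'
  exact (hf.mul_const c).integrableOn.congr_fun (fun x hx => by simp [hc x hx])
    (D.meas (j + 1) Q' hQ'.1)

lemma memV_avgDiffRepr (D : DyadicFamily μ B) {j : ℕ} {Q Qt : Set X}
    (hQt : Qt ∈ D.offspring j Q) : D.MemV j Q (avgDiffRepr μ Qt Q) := by
  refine ⟨fun Q' hQ' => ?_, fun x hxQ => ?_⟩
  · by_cases h : Q' = Qt
    · subst h
      exact ⟨(μ Q').toReal⁻¹ - (μ Q).toReal⁻¹, fun x hx => by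
        simp [avgDiffRepr, hx, hQ'.2.subset hx]⟩
    · refine ⟨-(μ Q).toReal⁻¹, fun x hx => ?_⟩
      have hxQt : x ∉ Qt := Set.disjoint_left.mp (D.pdisjoint (j + 1) hQ'.1 hQt.1 h) hx
      simp [avgDiffRepr, hQ'.2.subset hx, hxQt]
  · simp [avgDiffRepr, hxQ, Set.notMem_subset hQt.2.subset hxQ]

end DyadicFamily

theorem avg_offspring_sub_avg_le_general {X : Type*} [MeasurableSpace X]
    {μ : MeasureTheory.Measure X} {B : ℝ} (D : DyadicFamily μ B)
    (α : ℝ) (C : ℝ)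
    (f : X → ℝ) (hf : MeasureTheory.Integrable f μ)
    (j : ℕ) (Q : Set X) (hQ : Q ∈ D.cubes j)
    (n : ℕ)
    (ψ : Fin n → X → ℝ)
    (hV : ∀ i, D.MemV j Q (ψ i))
    (hortho : ∀ i i', ∫ x, ψ i x * ψ i' x ∂μ = if i = i' then 1 else 0)
    (hspan : ∀ g : X → ℝ, D.MemV j Q g → (∫ x, g x ∂μ) = 0 →
      ∃ c : Fin n → ℝ, ∀ x, g x = ∑ i, c i * ψ i x)
    (hcoeff : ∀ i, |∫ x, f x * ψ i x ∂μ| ≤ C * (μ Q).toReal ^ (α + 1/2))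
    (Qt : Set X) (hQt : Qt ∈ D.offspring j Q) :
    |DyadicFamily.avg μ f Qt - DyadicFamily.avg μ f Q| ≤
      C * Real.sqrt (((μ Q).toReal - (μ Qt).toReal) / ((μ Q).toReal * (μ Qt).toReal)) *
        Real.sqrt n * (μ Q).toReal ^ (α + 1/2) := by
  have := D.isProbabilityMeasure
  have hQm := D.meas j Q hQ
  have hQtm := D.meas (j + 1) Qt hQt.1
  have hμQ := (D.posMeasure j Q hQ).ne'
  have hμQt := (D.posMeasure (j + 1) Qt hQt.1).ne'
  have hψψ : ∀ i i', Integrable (fun x => ψ i x * ψ i' x) μ := fun i i' =>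
    (hV i').integrable_mul hQ (by simpa using (hV i).integrable_mul hQ (integrable_const 1))
  obtain ⟨c, hc⟩ := hspan _ (D.memV_avgDiffRepr hQt) (integral_avgDiffRepr hQtm hQm hμQt hμQ)
  have hnorm :
      ∑ i, c i ^ 2 = ((μ Q).toReal - (μ Qt).toReal) / ((μ Q).toReal * (μ Qt).toReal) := by
    rw [← integral_sum_mul_sum_of_orthonormal ψ c hψψ hortho]
    simp only [← hc]
    rw [integral_avgDiffRepr_mul_self hQtm hQm hQt.2.subset hμQt hμQ]
    have hQ0 := ENNReal.toReal_ne_zero.mpr ⟨hμQ, measure_ne_top μ Q⟩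
    have hQt0 := ENNReal.toReal_ne_zero.mpr ⟨hμQt, measure_ne_top μ Qt⟩
    field_simp
  calc _ = |∑ i, c i * ∫ x, f x * ψ i x ∂μ| := by
        rw [← integral_mul_avgDiffRepr hQtm hQm hf]
        simp only [hc]
        rw [integral_mul_sum_eq_sum_mul_integral _ _ _ _ fun i _ => (hV i).integrable_mul hQ hf]
    _ ≤ √(∑ i, c i ^ 2) * √(Finset.univ : Finset (Fin n)).card *
          (C * (μ Q).toReal ^ (α + 1/2)) :=
        Real.abs_sum_mul_le_sqrt_sum_sq_mul_sqrt_card _ _ _ fun i _ => hcoeff i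
    _ = _ := by rw [hnorm, Finset.card_univ, Fintype.card_fin]; ring

/-- If the Haar coefficients of `f ∈ L¹` relative to an orthonormal
basis `{μ(Q)^{-1/2}χ_Q} ∪ {ψ^λ_Q}` of `V_Q` satisfy `|⟨f,ψ^λ⟩| ≤ C μ(Q)^{α+1/2}`, then
for every offspring cube `Q̃` of `Q`,
`|f_{Q̃} − f_Q| ≤ C √((μ(Q)−μ(Q̃))/(μ(Q)μ(Q̃))) √(dim V_Q − 1) μ(Q)^{α+1/2}`. -/
theorem avg_offspring_sub_avg_le {X : Type*} [MeasurableSpace X]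
    {μ : MeasureTheory.Measure X} {B : ℝ} (hB : 2 ≤ B) (D : DyadicFamily μ B)
    (α : ℝ) (hα : 0 < α) (C : ℝ) (hC : 0 < C)
    (f : X → ℝ) (hf : MeasureTheory.Integrable f μ)
    (j : ℕ) (Q : Set X) (hQ : Q ∈ D.cubes j)
    (n : ℕ) (hn : n + 1 = (D.offspring j Q).ncard)
    (ψ : Fin n → X → ℝ)
    (hV : ∀ i, D.MemV j Q (ψ i))
    (hzero : ∀ i, ∫ x, ψ i x ∂μ = 0)
    (hortho : ∀ i i', ∫ x, ψ i x * ψ i' x ∂μ = if i = i' then 1 else 0)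
    (hspan : ∀ g : X → ℝ, D.MemV j Q g → (∫ x, g x ∂μ) = 0 →
      ∃ c : Fin n → ℝ, ∀ x, g x = ∑ i, c i * ψ i x)
    (hcoeff : ∀ i, |∫ x, f x * ψ i x ∂μ| ≤ C * (μ Q).toReal ^ (α + 1/2))
    (Qt : Set X) (hQt : Qt ∈ D.offspring j Q) :
    |DyadicFamily.avg μ f Qt - DyadicFamily.avg μ f Q| ≤
      C * Real.sqrt (((μ Q).toReal - (μ Qt).toReal) / ((μ Q).toReal * (μ Qt).toReal)) *
        Real.sqrt n * (μ Q).toReal ^ (α + 1/2) :=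
  avg_offspring_sub_avg_le_general D α C f hf j Q hQ n ψ hV hortho hspan hcoeff Qt hQt
end
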